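/- Let k be a field, R = k[x₁,…,xₙ], I a monomial ideal with dim_k(R/I) < ∞, M = R/I, and N a submodule of M. Then N is a reduced R-module if and only if N is a semisimple R-module. -/

import Mathlib

/-!
Both conditions force the variables to annihilate `N`. Modulo `I` each `xᵢ` satisfies a monic
polynomial relation, whose leading monomial `xᵢ ^ d` then lies in the monomial ideal `I`; so the
maximal ideal `(x₁, …, xₙ)` lies in the radical of the annihilator of `N`, and that annihilator
is radical both for reduced and for semisimple modules. Conversely, a module killed by a maximal
ideal is a vector space over the residue field, hence semisimple and reduced.
-/

open MvPolynomial

def IsMonomialIdeal {k : Type*} [Field k] {n : ℕ}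
    (I : Ideal (MvPolynomial (Fin n) k)) : Prop :=
  ∃ S : Set (Fin n →₀ ℕ), I = Ideal.span ((fun d => monomial d (1 : k)) '' S)

def Module.IsReduced (R M : Type*) [CommRing R] [AddCommGroup M] [Module R M] : Prop :=
  ∀ (a : R) (m : M), a ^ 2 • m = 0 → a • m = 0

namespace Module.IsReduced

variable {R M : Type*} [CommRing R] [AddCommGroup M] [Module R M]

theorem smul_eq_zero_of_pow_smul_eq_zero (h : IsReduced R M) {a : R} :
    ∀ (k : ℕ) {m : M}, a ^ (k + 1) • m = 0 → a • m = 0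
  | 0, _, hm => by rwa [zero_add, pow_one] at hm
  | k + 1, m, hm => h.smul_eq_zero_of_pow_smul_eq_zero k <| by
    have := h a (a ^ k • m) (by rwa [smul_smul, ← pow_add, add_comm])
    rwa [smul_smul, ← pow_succ'] at this

theorem annihilator_isRadical (h : IsReduced R M) : (annihilator R M).IsRadical := by
  rintro a ⟨k, hk⟩
  have hk' : a ^ (k + 1) ∈ annihilator R M := pow_succ' a k ▸ Ideal.mul_mem_left _ a hk
  rw [mem_annihilator] at hk' ⊢
  exact fun m => h.smul_eq_zero_of_pow_smul_eq_zero k (hk' m)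

end Module.IsReduced

section

variable {R M : Type*} [CommRing R] [AddCommGroup M] [Module R M]

theorem IsSemisimpleModule.isReduced [IsSemisimpleModule R M] : Module.IsReduced R M := by
  intro a m hm
  rw [← Submodule.mem_annihilator_span_singleton] at hm ⊢
  exact IsSemisimpleModule.annihilator_isRadical R (M := Submodule.span R {m}) ⟨2, hm⟩

theorem isSemisimpleModule_of_isMaximal_le_annihilator {J : Ideal R} [J.IsMaximal]
    (hJ : J ≤ Module.annihilator R M) : IsSemisimpleModule R M := by
  have hM : Module.IsTorsionBySet R M J := (Module.isTorsionBySet_iff_subset_annihilator _ _).2 hJ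
  let := Ideal.Quotient.field J
  let := hM.module
  exact hM.isSemisimpleModule_iff.1 inferInstance

theorem Module.isReduced_iff_isSemisimpleModule {J : Ideal R} [J.IsMaximal]
    (hJ : J ≤ (annihilator R M).radical) : IsReduced R M ↔ IsSemisimpleModule R M :=
  ⟨fun h => isSemisimpleModule_of_isMaximal_le_annihilator (h.annihilator_isRadical.radical ▸ hJ),
    fun _ => IsSemisimpleModule.isReduced⟩

theorem Submodule.isReduced_iff (N : Submodule R M) :
    Module.IsReduced R N ↔ ∀ (a : R), ∀ m ∈ N, a ^ 2 • m = 0 → a • m = 0 := by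
  simp only [Module.IsReduced, Subtype.forall, ← Submodule.coe_eq_zero, Submodule.coe_smul]

end

namespace MvPolynomial

theorem coeff_single_aeval_X {σ R : Type*} [CommSemiring R] (p : Polynomial R) (i : σ) (j : ℕ) :
    coeff (Finsupp.single i j) (Polynomial.aeval (X i) p) = p.coeff j := by
  classical
  rw [Polynomial.aeval_def, Polynomial.eval₂_eq_sum, Polynomial.sum_def, coeff_sum]
  simp only [X_pow_eq_monomial, algebraMap_eq, C_mul_monomial, mul_one, coeff_monomial,
    (Finsupp.single_injective i).eq_iff, Finset.sum_ite_eq', Polynomial.mem_support_iff]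
  exact ite_eq_left_iff.2 fun h => (not_not.1 h).symm

theorem ker_constantCoeff {σ R : Type*} [CommSemiring R] :
    RingHom.ker (constantCoeff : MvPolynomial σ R →+* R) = idealOfVars σ R := by
  ext p
  rw [← pow_one (idealOfVars σ R), mem_pow_idealOfVars_iff', RingHom.mem_ker]
  simp [Finsupp.degree_eq_zero_iff, constantCoeff_eq]

end MvPolynomial

namespace IsMonomialIdeal

variable {k : Type*} [Field k] {n : ℕ} {I : Ideal (MvPolynomial (Fin n) k)}

theorem monomial_mem_of_coeff_ne_zero (hI : IsMonomialIdeal I) {p : MvPolynomial (Fin n) k}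
    (hp : p ∈ I) {d : Fin n →₀ ℕ} (hd : coeff d p ≠ 0) : monomial d (1 : k) ∈ I := by
  obtain ⟨S, rfl⟩ := hI
  rw [mem_ideal_span_monomial_image] at hp ⊢
  simpa [support_monomial] using hp d (mem_support_iff.2 hd)

theorem X_mem_radical (hI : IsMonomialIdeal I) [FiniteDimensional k (MvPolynomial (Fin n) k ⧸ I)]
    (i : Fin n) : X i ∈ I.radical := by
  obtain ⟨p, hmonic, hp⟩ := Algebra.IsIntegral.isIntegral (R := k) (Ideal.Quotient.mk I (X i))
  have hpI : Polynomial.aeval (X i) p ∈ I := by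
    rwa [← Ideal.Quotient.eq_zero_iff_mem, ← Ideal.Quotient.mkₐ_eq_mk k,
      ← Polynomial.aeval_algHom_apply]
  refine ⟨p.natDegree, X_pow_eq_monomial (R := k) ▸ hI.monomial_mem_of_coeff_ne_zero hpI ?_⟩
  rw [coeff_single_aeval_X, hmonic.coeff_natDegree]
  exact one_ne_zero

theorem ker_constantCoeff_le_radical (hI : IsMonomialIdeal I)
    [FiniteDimensional k (MvPolynomial (Fin n) k ⧸ I)] : RingHom.ker constantCoeff ≤ I.radical := by
  rw [ker_constantCoeff]
  exact Ideal.span_le.2 (Set.range_subset_iff.2 hI.X_mem_radical)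

end IsMonomialIdeal

theorem reduced_iff_semisimple_general {k : Type*} [Field k] {n : ℕ}
    (I : Ideal (MvPolynomial (Fin n) k)) (hI : IsMonomialIdeal I)
    [FiniteDimensional k (MvPolynomial (Fin n) k ⧸ I)]
    (N : Submodule (MvPolynomial (Fin n) k) (MvPolynomial (Fin n) k ⧸ I)) :
    (∀ (a : MvPolynomial (Fin n) k), ∀ m ∈ N, a ^ 2 • m = 0 → a • m = 0) ↔
      IsSemisimpleModule (MvPolynomial (Fin n) k) N := by
  have : (RingHom.ker (constantCoeff : MvPolynomial (Fin n) k →+* k)).IsMaximal :=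
    RingHom.ker_isMaximal_of_surjective _ fun c => ⟨C c, constantCoeff_C _ c⟩
  have hIN : I ≤ Module.annihilator _ N :=
    Ideal.annihilator_quotient.symm.trans_le <|
      N.subtype.annihilator_le_of_injective N.injective_subtype
  rw [← N.isReduced_iff, Module.isReduced_iff_isSemisimpleModule <|
    hI.ker_constantCoeff_le_radical.trans (Ideal.radical_mono hIN)]

/-- For `M = R/I` with `I` a monomial ideal and `dim_k R/I < ∞`, a submodule `N` of `M`
is reduced if and only if it is semisimple. -/
theorem reduced_iff_semisimple {k : Type*} [Field k] [CharZero k] {n : ℕ}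
    (I : Ideal (MvPolynomial (Fin n) k)) (hI : IsMonomialIdeal I)
    [FiniteDimensional k (MvPolynomial (Fin n) k ⧸ I)]
    (N : Submodule (MvPolynomial (Fin n) k) (MvPolynomial (Fin n) k ⧸ I)) :
    (∀ (a : MvPolynomial (Fin n) k), ∀ m ∈ N, a ^ 2 • m = 0 → a • m = 0) ↔
      IsSemisimpleModule (MvPolynomial (Fin n) k) N :=
  reduced_iff_semisimple_general I hI N
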